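/- arXiv:2405.07499 — 5 statements merged into one kernel-verified Lean document; each statement's English description precedes it below -/
import Mathlib

section
/- Let G = (V, E) be a finite graph with vertex weights w : V → ℝ≥0, vertex costs c : V → ℝ>0, and edge weights w : E → ℝ≥0. Define the density of an induced subgraph H as d(H) = (Σ_{e ∈ E(H)} w(e) + Σ_{v ∈ V(H)} w(v)) / (Σ_{v ∈ V(H)} c(v)). The greedy algorithm that iteratively removes a vertex v minimizing (w(v) + Σ_{e incident on v in the current graph} w(e)) / c(v), and returns the intermediate induced subgraph of maximum density encountered, outputs a subgraph H with d(H) ≥ d(H*)/2 where H* is a maximum-density nonempty induced subgraph of G. -/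
open Finset

/-- Density of the induced subgraph on `H` of a weighted graph given by
vertex weights `w`, vertex costs `c` and symmetric edge weights `we`
(with `we v v = 0`); the double sum counts each edge twice, whence the
factor `1/2`. -/
noncomputable def density {V : Type*} [Fintype V] [DecidableEq V]
    (w c : V → ℝ) (we : V → V → ℝ) (H : Finset V) : ℝ :=
  ((1 / 2) * ∑ u ∈ H, ∑ v ∈ H, we u v + ∑ v ∈ H, w v) / ∑ v ∈ H, c v

/-- The greedy peeling algorithm for the densest-subgraph-with-vertex-costs
problem (iteratively remove a vertex minimizing weighted degree divided by
cost, keep the best intermediate subgraph) is a 2-approximation. -/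
theorem stmt3 {V : Type*} [Fintype V] [DecidableEq V]
    (w c : V → ℝ) (we : V → V → ℝ)
    (hw : ∀ v, 0 ≤ w v) (hc : ∀ v, 0 < c v)
    (hwe : ∀ u v, 0 ≤ we u v) (hsym : ∀ u v, we u v = we v u)
    (hself : ∀ v, we v v = 0)
    (S : ℕ → Finset V) (hS0 : S 0 = univ)
    (hstep : ∀ k, (S k).Nonempty → ∃ v ∈ S k,
      S (k + 1) = (S k).erase v ∧
      ∀ v' ∈ S k,
        (w v + ∑ u ∈ S k, we v u) / c v ≤ (w v' + ∑ u ∈ S k, we v' u) / c v')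
    (Hstar : Finset V) (hne : Hstar.Nonempty)
    (hopt : ∀ H : Finset V, H.Nonempty → density w c we H ≤ density w c we Hstar) :
    ∃ k, (S k).Nonempty ∧ density w c we Hstar / 2 ≤ density w c we (S k) := by
  classical
  set ρ := density w c we Hstar with hρdef
  have hCpos : ∀ H : Finset V, H.Nonempty → 0 < ∑ v ∈ H, c v :=
    fun H hH => Finset.sum_pos (fun v _ => hc v) hH
  -- numerator bounded by ρ times cost, for all H (also empty H)
  have key : ∀ H : Finset V,
      (1 / 2) * ∑ u ∈ H, ∑ v ∈ H, we u v + ∑ v ∈ H, w v ≤ ρ * ∑ v ∈ H, c v := by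
    intro H
    rcases H.eq_empty_or_nonempty with h | h
    · simp [h]
    · have hC := hCpos H h
      have hd := hopt H h
      have : ((1 / 2) * ∑ u ∈ H, ∑ v ∈ H, we u v + ∑ v ∈ H, w v)
          = density w c we H * ∑ v ∈ H, c v := by
        rw [density, div_mul_cancel₀ _ (ne_of_gt hC)]
      rw [this]
      exact mul_le_mul_of_nonneg_right hd hC.le
  -- degree bound for vertices of Hstar
  have deg : ∀ v ∈ Hstar, ρ * c v ≤ w v + ∑ u ∈ Hstar, we v u := by
    intro v hv
    set H' := Hstar.erase v with hH'
    have hvH' : v ∉ H' := Finset.notMem_erase v Hstar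
    have hins : insert v H' = Hstar := Finset.insert_erase hv
    have hrow : ∑ u ∈ Hstar, we v u = ∑ u ∈ H', we v u := by
      rw [← hins, Finset.sum_insert hvH', hself v, zero_add]
    have h1 : ∑ u ∈ Hstar, ∑ x ∈ Hstar, we u x
        = ∑ u ∈ H', ∑ x ∈ H', we u x + 2 * ∑ u ∈ Hstar, we v u := by
      rw [hrow, ← hins, Finset.sum_insert hvH']
      simp only [Finset.sum_insert hvH']
      rw [Finset.sum_add_distrib]
      have hcol : ∑ u ∈ H', we u v = ∑ u ∈ H', we v u :=
        Finset.sum_congr rfl fun u _ => hsym u v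
      rw [hcol, hself v]; ring
    have hwsplit : ∑ u ∈ Hstar, w u = w v + ∑ u ∈ H', w u := by
      rw [← hins, Finset.sum_insert hvH']
    have hcsplit : ∑ u ∈ Hstar, c u = c v + ∑ u ∈ H', c u := by
      rw [← hins, Finset.sum_insert hvH']
    have hNstar : (1 / 2) * ∑ u ∈ Hstar, ∑ x ∈ Hstar, we u x + ∑ u ∈ Hstar, w u
        = ρ * ∑ u ∈ Hstar, c u := by
      rw [hρdef, density, div_mul_cancel₀ _ (ne_of_gt (hCpos Hstar hne))]
    have hkey := key H'
    have h2 : (1 / 2) * ∑ u ∈ Hstar, ∑ x ∈ Hstar, we u x + ∑ u ∈ Hstar, w u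
        = ((1 / 2) * ∑ u ∈ H', ∑ x ∈ H', we u x + ∑ u ∈ H', w u)
          + (w v + ∑ u ∈ Hstar, we v u) := by
      rw [h1, hwsplit]; ring
    rw [hcsplit, mul_add] at hNstar
    linarith [hkey, hNstar, h2]
  -- existence of a step where Hstar ceases to be contained
  have hex : ∃ k, ¬ Hstar ⊆ S k := by
    by_contra h
    push_neg at h
    have hmono : ∀ k, (S (k + 1)).card < (S k).card := by
      intro k
      obtain ⟨v, hv, hSk, -⟩ := hstep k (hne.mono (h k))
      rw [hSk]
      exact Finset.card_erase_lt_of_mem hv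
    have hcard : ∀ k, (S k).card + k ≤ (S 0).card := by
      intro k
      induction k with
      | zero => simp
      | succ n ih => have := hmono n; omega
    have := hcard ((S 0).card + 1); omega
  have hk0pos : Nat.find hex ≠ 0 := by
    intro h0
    have := Nat.find_spec hex
    rw [h0, hS0] at this
    exact this (Finset.subset_univ Hstar)
  set k := Nat.find hex - 1 with hkdef
  have hk1 : k + 1 = Nat.find hex := by omega
  have hsub : Hstar ⊆ S k := by
    by_contra h
    exact Nat.find_min hex (show k < Nat.find hex by omega) h
  have hnot : ¬ Hstar ⊆ S (k + 1) := by
    rw [hk1]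
    exact Nat.find_spec hex
  have hSkne : (S k).Nonempty := hne.mono hsub
  obtain ⟨v, hv, hS1, hmin⟩ := hstep k hSkne
  have hvH : v ∈ Hstar := by
    by_contra hvH
    apply hnot
    rw [hS1]
    intro x hx
    exact Finset.mem_erase.mpr ⟨fun hxv => hvH (hxv ▸ hx), hsub hx⟩
  -- ρ ≤ ratio of v in S k
  have h1 : ρ * c v ≤ w v + ∑ u ∈ S k, we v u :=
    (deg v hvH).trans (add_le_add_right
      (Finset.sum_le_sum_of_subset_of_nonneg hsub (fun u _ _ => hwe v u)) _)
  have hρr : ρ ≤ (w v + ∑ u ∈ S k, we v u) / c v := (le_div_iff₀ (hc v)).mpr h1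
  have hall : ∀ v' ∈ S k, ρ * c v' ≤ w v' + ∑ u ∈ S k, we v' u := fun v' hv' =>
    (le_div_iff₀ (hc v')).mp (hρr.trans (hmin v' hv'))
  have hsum : ρ * ∑ v' ∈ S k, c v' ≤ ∑ v' ∈ S k, (w v' + ∑ u ∈ S k, we v' u) := by
    rw [Finset.mul_sum]
    exact Finset.sum_le_sum hall
  refine ⟨k, hSkne, ?_⟩
  have hC := hCpos (S k) hSkne
  rw [density, div_le_div_iff₀ two_pos hC]
  have hsplit : ∑ v' ∈ S k, (w v' + ∑ u ∈ S k, we v' u)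
      = ∑ v' ∈ S k, w v' + ∑ v' ∈ S k, ∑ u ∈ S k, we v' u :=
    Finset.sum_add_distrib
  have hwn : 0 ≤ ∑ v' ∈ S k, w v' := Finset.sum_nonneg fun v' _ => hw v'
  rw [hsplit] at hsum
  nlinarith [hsum, hwn]
end

section
/- Let G = (V, E) be a finite graph with nonnegative vertex weights w(v), positive vertex costs c(v), and nonnegative edge weights w(e), and let H* be a nonempty induced subgraph maximizing the density d(H) = (Σ_{e∈E(H)} w(e) + Σ_{v∈V(H)} w(v))/Σ_{v∈V(H)} c(v). Then every vertex v ∈ V(H*) satisfies w(v) + Σ_{e ∋ v, e ∈ E(H*)} w(e) ≥ c(v) · d(H*). -/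
open Finset

/-- In a maximum-density induced subgraph `H*` (DSVC setting), every vertex
`v ∈ H*` has weighted degree `w v + Σ_{e ∋ v, e ∈ E(H*)} w(e)` at least
`c v` times the optimal density. -/
theorem stmt4 {V : Type*} [Fintype V] [DecidableEq V]
    (w c : V → ℝ) (we : V → V → ℝ)
    (hw : ∀ v, 0 ≤ w v) (hc : ∀ v, 0 < c v)
    (hwe : ∀ u v, 0 ≤ we u v) (hsym : ∀ u v, we u v = we v u)
    (hself : ∀ v, we v v = 0)
    (Hstar : Finset V) (hne : Hstar.Nonempty)
    (hopt : ∀ H : Finset V, H.Nonempty → density w c we H ≤ density w c we Hstar) :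
    ∀ v ∈ Hstar, c v * density w c we Hstar ≤ w v + ∑ u ∈ Hstar, we v u := by
  intro v hv
  have hS : 0 < ∑ u ∈ Hstar, c u := Finset.sum_pos (fun u _ => hc u) hne
  set A : ℝ := (1 / 2) * ∑ u ∈ Hstar, ∑ x ∈ Hstar, we u x + ∑ x ∈ Hstar, w x with hA
  set D : ℝ := w v + ∑ u ∈ Hstar, we v u with hD
  by_cases hH' : (Hstar.erase v).Nonempty
  · have hS' : 0 < ∑ u ∈ Hstar.erase v, c u :=
      Finset.sum_pos (fun u _ => hc u) hH'
    have hc' : ∑ u ∈ Hstar.erase v, c u = ∑ u ∈ Hstar, c u - c v :=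
      Finset.sum_erase_eq_sub hv
    have hw' : ∑ u ∈ Hstar.erase v, w u = ∑ u ∈ Hstar, w u - w v :=
      Finset.sum_erase_eq_sub hv
    have hwe1 : ∀ u : V, ∑ x ∈ Hstar.erase v, we u x = ∑ x ∈ Hstar, we u x - we u v :=
      fun u => Finset.sum_erase_eq_sub hv
    have hwe2 : ∑ u ∈ Hstar.erase v, ∑ x ∈ Hstar.erase v, we u x
        = ∑ u ∈ Hstar, ∑ x ∈ Hstar, we u x - 2 * ∑ u ∈ Hstar, we v u := by
      have h1 : ∑ u ∈ Hstar.erase v, ∑ x ∈ Hstar.erase v, we u x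
          = ∑ u ∈ Hstar.erase v, (∑ x ∈ Hstar, we u x - we u v) := by
        exact Finset.sum_congr rfl (fun u _ => hwe1 u)
      rw [h1, Finset.sum_sub_distrib]
      have h2 : ∑ u ∈ Hstar.erase v, ∑ x ∈ Hstar, we u x
          = ∑ u ∈ Hstar, ∑ x ∈ Hstar, we u x - ∑ x ∈ Hstar, we v x :=
        Finset.sum_erase_eq_sub hv
      have h3 : ∑ u ∈ Hstar.erase v, we u v = ∑ u ∈ Hstar, we v u - we v v := by
        rw [show ∑ u ∈ Hstar.erase v, we u v = ∑ u ∈ Hstar.erase v, we v u from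
          Finset.sum_congr rfl (fun u _ => hsym u v)]
        exact Finset.sum_erase_eq_sub hv
      rw [h2, h3, hself]
      have : ∑ x ∈ Hstar, we v x = ∑ u ∈ Hstar, we v u := rfl
      rw [this]; ring
    have key := hopt (Hstar.erase v) hH'
    unfold density at key
    rw [hwe2, hw'] at key
    rw [div_le_div_iff₀ hS' hS] at key
    rw [hc'] at key
    have hkey : c v * A ≤ D * ∑ u ∈ Hstar, c u := by rw [hA, hD]; nlinarith [key]
    show c v * (A / ∑ u ∈ Hstar, c u) ≤ D
    rw [mul_div_assoc', div_le_iff₀ hS]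
    linarith
  · have hsingle : Hstar = {v} := by
      rw [Finset.not_nonempty_iff_eq_empty] at hH'
      have := (Finset.erase_eq_empty_iff _ _).mp hH'
      rcases this with h | h
      · exact absurd h (Finset.nonempty_iff_ne_empty.mp hne)
      · exact h
    subst hsingle
    show c v * (A / ∑ u ∈ ({v} : Finset V), c u) ≤ D
    simp only [hA, hD, Finset.sum_singleton, hself, mul_zero, zero_add, add_zero]
    rw [mul_div_assoc', div_le_iff₀ (hc v)]
    have := hc v
    nlinarith [hw v]
end

section
/- Let U be a finite set of n elements (gates) and let 𝒮 be a family of 'covering units', where each unit is a nonempty subset of a ground set M of 'CEs', each CE M having cost c(M) > 0; each element of U is covered by at least one unit consisting of at most 2 CEs. Consider the greedy algorithm that, in each iteration, selects a subset T of the remaining CEs maximizing (number of not-yet-covered elements covered using CEs in the selected set so far together with T) divided by (Σ_{M∈T} c(M)). If in each iteration the greedy picks an optimal such subset T, then the total cost of all selected CEs is at most H_n = Σ_{k=1}^n 1/k times the minimum cost of any set of CEs covering all of U. -/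
open Finset

/-- A selection `F` of CEs covers gate `u` if some covering unit of `u`
is contained in `F`. -/
def Covers {U M : Type*} (cov : U → Finset (Finset M)) (F : Finset M) (u : U) : Prop :=
  ∃ s ∈ cov u, s ⊆ F

/-- The `n`-th harmonic number as a real. -/
noncomputable def Hharm (n : ℕ) : ℝ := ∑ k ∈ range n, (1 : ℝ) / (k + 1)

lemma Hharm_mono : Monotone Hharm := by
  intro a b hab
  apply Finset.sum_le_sum_of_subset_of_nonneg (Finset.range_subset_range.2 hab)
  intro k _ _
  positivity

lemma Hharm_nonneg (n : ℕ) : 0 ≤ Hharm n := by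
  have := Hharm_mono (Nat.zero_le n)
  simpa [Hharm] using this

lemma Hharm_gap {a b : ℕ} (hab : a ≤ b) :
    ((b : ℝ) - a) / b ≤ Hharm b - Hharm a := by
  rcases Nat.eq_zero_or_pos b with hb | hb
  · subst hb
    interval_cases a
    simp
  · have key : Hharm b - Hharm a = ∑ k ∈ Finset.Ico a b, (1 : ℝ) / (k + 1) := by
      rw [Hharm, Hharm, ← Finset.sum_Ico_eq_sub _ hab]
    rw [key]
    have hbR : (0 : ℝ) < b := by exact_mod_cast hb
    have h1 : ∀ k ∈ Finset.Ico a b, (1 : ℝ) / b ≤ (1 : ℝ) / (k + 1) := by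
      intro k hk
      have hk2 : k + 1 ≤ b := (Finset.mem_Ico.1 hk).2
      apply one_div_le_one_div_of_le
      · positivity
      · exact_mod_cast hk2
    calc ((b : ℝ) - a) / b = (Finset.Ico a b).card * ((1 : ℝ) / b) := by
          rw [Nat.card_Ico]
          push_cast [hab]
          ring
      _ = ∑ _k ∈ Finset.Ico a b, (1 : ℝ) / b := by
          rw [Finset.sum_const, nsmul_eq_mul]
      _ ≤ ∑ k ∈ Finset.Ico a b, (1 : ℝ) / (k + 1) := Finset.sum_le_sum h1

/-- The generalized greedy set-cover algorithm for CE selection: each gate is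
covered by some unit of at most two CEs; in each iteration the algorithm
picks a batch `T i` of CEs maximizing the number of newly covered gates per
unit cost.  If each batch is optimal for this ratio, the total cost of the
selected CEs is at most `H_n` times the cost of any cover, where `n` is the
number of gates. -/
theorem stmt5 {U M : Type*} [Fintype U] [DecidableEq M]
    (cov : U → Finset (Finset M))
    (hcov : ∀ u, ∃ s ∈ cov u, s.Nonempty ∧ s.card ≤ 2)
    (c : M → ℝ) (hc : ∀ m, 0 < c m)
    (l : ℕ) (T : ℕ → Finset M)
    (Sel : ℕ → Finset M) (hSel0 : Sel 0 = ∅)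
    (hSelStep : ∀ i, Sel (i + 1) = Sel i ∪ T i)
    (hrun : ∀ i < l, ∃ u : U, ¬ Covers cov (Sel i) u)  -- greedy runs only while some gate is uncovered
    (hgreedy : ∀ i < l, (T i).Nonempty ∧
      ∀ T' : Finset M, T'.Nonempty →
        (Set.ncard {u : U | Covers cov (Sel i ∪ T') u ∧ ¬ Covers cov (Sel i) u} : ℝ) *
            (∑ m ∈ T i, c m) ≤
        (Set.ncard {u : U | Covers cov (Sel i ∪ T i) u ∧ ¬ Covers cov (Sel i) u} : ℝ) *
            (∑ m ∈ T', c m))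
    (hdone : ∀ u : U, Covers cov (Sel l) u)
    (Copt : Finset M) (hCopt : ∀ u : U, Covers cov Copt u) :
    ∑ i ∈ range l, ∑ m ∈ T i, c m ≤
      (∑ k ∈ range (Fintype.card U), (1 : ℝ) / (k + 1)) * ∑ m ∈ Copt, c m := by
  classical
  set cO : ℝ := ∑ m ∈ Copt, c m with hcOdef
  have hcO0 : 0 ≤ cO := Finset.sum_nonneg fun m _ => (hc m).le
  set unc : ℕ → ℕ := fun i => Set.ncard {u : U | ¬ Covers cov (Sel i) u} with huncdef
  -- per-step inequality
  have hstep : ∀ i < l, ∑ m ∈ T i, c m ≤ (Hharm (unc i) - Hharm (unc (i + 1))) * cO := by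
    intro i hi
    obtain ⟨u0, hu0⟩ := hrun i hi
    -- Copt is nonempty
    obtain ⟨s0, hs0mem, hs0sub⟩ := hCopt u0
    have hs0ne : s0.Nonempty := by
      rcases s0.eq_empty_or_nonempty with h | h
      · exact absurd ⟨s0, hs0mem, by simp [h]⟩ hu0
      · exact h
    have hCoptne : Copt.Nonempty := hs0ne.mono hs0sub
    have hcOpos : 0 < cO :=
      Finset.sum_pos (fun m _ => hc m) hCoptne
    -- sets
    set A : Set U := {u : U | ¬ Covers cov (Sel i) u} with hAdef
    set N : Set U := {u : U | Covers cov (Sel i ∪ T i) u ∧ ¬ Covers cov (Sel i) u} with hNdef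
    set A' : Set U := {u : U | ¬ Covers cov (Sel (i + 1)) u} with hA'def
    have hcovall : ∀ u : U, Covers cov (Sel i ∪ Copt) u := by
      intro u
      obtain ⟨s, hs, hsub⟩ := hCopt u
      exact ⟨s, hs, hsub.trans Finset.subset_union_right⟩
    have hAunion : A = A' ∪ N := by
      ext u
      simp only [hAdef, hA'def, hNdef, Set.mem_setOf_eq, Set.mem_union, hSelStep i]
      constructor
      · intro hu
        by_cases h : Covers cov (Sel i ∪ T i) u
        · exact Or.inr ⟨h, hu⟩
        · exact Or.inl h
      · rintro (h | ⟨_, h⟩)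
        · intro hcon
          obtain ⟨s, hs, hsub⟩ := hcon
          exact h ⟨s, hs, hsub.trans Finset.subset_union_left⟩
        · exact h
    have hdisj : Disjoint A' N := by
      rw [Set.disjoint_left]
      intro u hu hu'
      exact hu (by rw [hSelStep i]; exact hu'.1)
    have hcard : unc i = unc (i + 1) + N.ncard := by
      have h := Set.ncard_union_eq hdisj (Set.toFinite A') (Set.toFinite N)
      calc unc i = A.ncard := rfl
        _ = A'.ncard + N.ncard := by rw [hAunion, h]
        _ = unc (i + 1) + N.ncard := rfl
    have huncpos : 0 < unc i := by
      exact (Set.ncard_pos (Set.toFinite _)).2 ⟨u0, hu0⟩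
    -- greedy inequality with T' = Copt
    have hg := (hgreedy i hi).2 Copt hCoptne
    have hAeq : {u : U | Covers cov (Sel i ∪ Copt) u ∧ ¬ Covers cov (Sel i) u} = A := by
      ext u; simp [hAdef, hcovall u]
    rw [hAeq] at hg
    -- hg : (A.ncard : ℝ) * cost ≤ (N.ncard : ℝ) * cO
    have hAncard : A.ncard = unc i := rfl
    have huncposR : (0 : ℝ) < (unc i : ℝ) := by exact_mod_cast huncpos
    have h1 : ∑ m ∈ T i, c m ≤ (N.ncard : ℝ) / (unc i) * cO := by
      rw [div_mul_eq_mul_div, le_div_iff₀ huncposR]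
      calc (∑ m ∈ T i, c m) * (unc i : ℝ) = (unc i : ℝ) * ∑ m ∈ T i, c m := by ring
        _ ≤ (N.ncard : ℝ) * cO := by rw [← hAncard]; exact hg
    refine h1.trans (mul_le_mul_of_nonneg_right ?_ hcO0)
    have hle : unc (i + 1) ≤ unc i := by omega
    have := Hharm_gap hle
    refine le_trans ?_ this
    have : ((unc i : ℝ) - (unc (i + 1) : ℝ)) = (N.ncard : ℝ) := by
      have : (unc i : ℝ) = (unc (i + 1) : ℝ) + (N.ncard : ℝ) := by exact_mod_cast hcard
      linarith
    rw [this]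
  -- sum up
  have hsum : ∑ i ∈ range l, ∑ m ∈ T i, c m ≤
      ∑ i ∈ range l, (Hharm (unc i) - Hharm (unc (i + 1))) * cO :=
    Finset.sum_le_sum fun i hi => hstep i (Finset.mem_range.1 hi)
  have htel : ∑ i ∈ range l, (Hharm (unc i) - Hharm (unc (i + 1))) * cO
      = (Hharm (unc 0) - Hharm (unc l)) * cO := by
    rw [← Finset.sum_mul]
    congr 1
    exact Finset.sum_range_sub' (fun i => Hharm (unc i)) l
  have hunc0 : unc 0 ≤ Fintype.card U := by
    calc unc 0 ≤ (Set.univ : Set U).ncard :=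
          Set.ncard_le_ncard (Set.subset_univ _) (Set.toFinite _)
      _ = Fintype.card U := by simp [Set.ncard_univ]
  have hfinal : (Hharm (unc 0) - Hharm (unc l)) * cO ≤ Hharm (Fintype.card U) * cO := by
    apply mul_le_mul_of_nonneg_right _ hcO0
    have h1 := Hharm_mono hunc0
    have h2 := Hharm_nonneg (unc l)
    linarith
  calc ∑ i ∈ range l, ∑ m ∈ T i, c m
      ≤ (Hharm (unc 0) - Hharm (unc l)) * cO := by rw [← htel]; exact hsum
    _ ≤ Hharm (Fintype.card U) * cO := hfinal
    _ = (∑ k ∈ range (Fintype.card U), (1 : ℝ) / (k + 1)) * ∑ m ∈ Copt, c m := rfl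
end

section
/- Let L : 𝒫(E) → ℝ≥0 be a monotone latency function on subsets of a finite set E of m EPs, with L(∅)=0. Suppose an adversarial partition problem: partition E into batches E_1,...,E_l (in some order) minimizing Σ_i L(E_i), subject to L(E_i) ≤ τ for each i. If at each step a greedy algorithm selects the remaining-subset batch with minimum average latency L(B)/|B| among feasible batches B ⊆ S (S the set of remaining EPs with L({e}) ≤ τ for all e), then the greedy solution has total latency at most H_m = Σ_{k=1}^m 1/k times the optimal total latency, provided L is subadditive (L(A ∪ B) ≤ L(A) + L(B)). -/
open Finset

/-- Partial harmonic sum. -/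
noncomputable def harm (n : ℕ) : ℝ := ∑ k ∈ Finset.range n, (1 : ℝ) / (k + 1)

lemma harm_mono {a b : ℕ} (h : a ≤ b) : harm a ≤ harm b := by
  unfold harm
  exact Finset.sum_le_sum_of_subset_of_nonneg (Finset.range_subset_range.2 h)
    (by intro k _ _; positivity)

lemma harm_diff {a b : ℕ} (hba : b ≤ a) (ha : 0 < a) :
    ((a : ℝ) - b) / a ≤ harm a - harm b := by
  have h1 : harm a - harm b = ∑ k ∈ Finset.Ico b a, (1 : ℝ) / (k + 1) := by
    unfold harm
    rw [Finset.sum_Ico_eq_sub _ hba]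
  rw [h1]
  have h2 : ∀ k ∈ Finset.Ico b a, (1 : ℝ) / a ≤ (1 : ℝ) / (k + 1) := by
    intro k hk
    have hk' : k < a := (Finset.mem_Ico.1 hk).2
    have : (k : ℝ) + 1 ≤ a := by exact_mod_cast hk'
    have hkpos : (0 : ℝ) < (k : ℝ) + 1 := by positivity
    exact one_div_le_one_div_of_le hkpos this
  calc ((a : ℝ) - b) / a = (Finset.Ico b a).card • ((1 : ℝ) / a) := by
        rw [Nat.card_Ico, nsmul_eq_mul, Nat.cast_sub hba]; ring
    _ ≤ ∑ k ∈ Finset.Ico b a, (1 : ℝ) / (k + 1) :=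
        Finset.card_nsmul_le_sum _ _ _ h2

/-- The min-average-latency greedy batching algorithm for the GED problem
with null consumption order: given a monotone subadditive latency function
`L` with `L ∅ = 0` and all singletons feasible (`L {e} ≤ τ`), the greedy
that repeatedly picks a feasible batch of minimum average latency among the
remaining EPs produces batches of total latency at most `H_m` times that of
any feasible partition, where `m` is the number of EPs. -/
theorem stmt6 {E : Type*} [Fintype E] [DecidableEq E]
    (L : Finset E → ℝ) (τ : ℝ)
    (hL0 : L ∅ = 0) (hnn : ∀ A, 0 ≤ L A)
    (hmono : ∀ A B : Finset E, A ⊆ B → L A ≤ L B)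
    (hsub : ∀ A B : Finset E, L (A ∪ B) ≤ L A + L B)
    (hsingle : ∀ e : E, L {e} ≤ τ)
    -- the greedy run: batches B 0, …, B (l-1), Rem i = EPs remaining before batch i
    (l : ℕ) (B : ℕ → Finset E)
    (Rem : ℕ → Finset E) (hR0 : Rem 0 = univ)
    (hRstep : ∀ i, Rem (i + 1) = Rem i \ B i)
    (hgreedy : ∀ i < l, (B i).Nonempty ∧ B i ⊆ Rem i ∧ L (B i) ≤ τ ∧
      ∀ B' ⊆ Rem i, B'.Nonempty → L B' ≤ τ →
        L (B i) * (B'.card : ℝ) ≤ L B' * ((B i).card : ℝ))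
    (hdone : Rem l = ∅)
    -- an arbitrary feasible partition P 0, …, P (l'-1)
    (l' : ℕ) (P : ℕ → Finset E)
    (hPfeas : ∀ i < l', L (P i) ≤ τ)
    (hPdisj : ∀ i j, i < l' → j < l' → i ≠ j → Disjoint (P i) (P j))
    (hPcover : ∀ e : E, ∃ i < l', e ∈ P i) :
    ∑ i ∈ range l, L (B i) ≤
      (∑ k ∈ range (Fintype.card E), (1 : ℝ) / (k + 1)) * ∑ i ∈ range l', L (P i) := by
  classical
  set m := Fintype.card E with hm
  set r : ℕ → ℕ → ℕ := fun j i => (P j ∩ Rem i).card with hr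
  -- basic facts
  have hrmono : ∀ j i, r j (i + 1) ≤ r j i := by
    intro j i
    apply Finset.card_le_card
    rw [hRstep]
    exact Finset.inter_subset_inter_left (Finset.sdiff_subset)
  have hrdiff : ∀ j i, r j i - r j (i + 1) = (P j ∩ B i ∩ Rem i).card := by
    intro j i
    have h1 : P j ∩ Rem (i + 1) = (P j ∩ Rem i) \ B i := by
      rw [hRstep]; ext x; simp [Finset.mem_sdiff, Finset.mem_inter]; tauto
    have h2 : (P j ∩ Rem i) ∩ B i = P j ∩ B i ∩ Rem i := by
      ext x; simp [Finset.mem_inter]; tauto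
    have := Finset.card_sdiff_add_card_inter (P j ∩ Rem i) (B i)
    simp only [hr, h1, h2] at *
    omega
  -- decomposition of the card of B i
  have hBdecomp : ∀ i < l, ∑ j ∈ range l', (r j i - r j (i + 1)) = (B i).card := by
    intro i hi
    obtain ⟨hne, hsubR, hfeas, hopt⟩ := hgreedy i hi
    have hinter : ∀ j, P j ∩ B i ∩ Rem i = P j ∩ B i := by
      intro j
      ext x; simp only [Finset.mem_inter]
      constructor
      · tauto
      · rintro ⟨h1, h2⟩; exact ⟨⟨h1, h2⟩, hsubR h2⟩
    have heq : B i = (range l').biUnion (fun j => P j ∩ B i) := by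
      ext x
      simp only [Finset.mem_biUnion, Finset.mem_range, Finset.mem_inter]
      constructor
      · intro hx
        obtain ⟨j, hj, hxj⟩ := hPcover x
        exact ⟨j, hj, hxj, hx⟩
      · rintro ⟨j, _, _, hx⟩; exact hx
    have hcard : (B i).card = ∑ j ∈ range l', (P j ∩ B i).card := by
      conv_lhs => rw [heq]
      apply Finset.card_biUnion
      intro a ha b hb hab
      exact (hPdisj a b (Finset.mem_range.1 ha) (Finset.mem_range.1 hb) hab).mono
        (Finset.inter_subset_left) (Finset.inter_subset_left)
    rw [hcard]
    apply Finset.sum_congr rfl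
    intro j _
    rw [hrdiff, hinter]
  -- key per-step inequality
  have hkey : ∀ i < l, ∀ j < l',
      L (B i) * ((r j i : ℝ) - r j (i + 1)) / (B i).card ≤
        L (P j) * (harm (r j i) - harm (r j (i + 1))) := by
    intro i hi j hj
    obtain ⟨hne, hsubR, hfeas, hopt⟩ := hgreedy i hi
    rcases Nat.eq_zero_or_pos (r j i) with h0 | hpos
    · have h0' : r j (i + 1) = 0 := Nat.le_zero.1 (h0 ▸ hrmono j i)
      rw [h0, h0']
      simp
    · -- R = P j ∩ Rem i nonempty
      have hRne : (P j ∩ Rem i).Nonempty := Finset.card_pos.1 hpos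
      have hRsub : P j ∩ Rem i ⊆ Rem i := Finset.inter_subset_right
      have hRL : L (P j ∩ Rem i) ≤ L (P j) := hmono _ _ Finset.inter_subset_left
      have hRfeas : L (P j ∩ Rem i) ≤ τ := hRL.trans (hPfeas j hj)
      have hgr := hopt _ hRsub hRne hRfeas
      -- L (B i) * r j i ≤ L (P j) * (B i).card
      have hgr2 : L (B i) * (r j i : ℝ) ≤ L (P j) * (B i).card := by
        calc L (B i) * (r j i : ℝ) ≤ L (P j ∩ Rem i) * (B i).card := hgr
          _ ≤ L (P j) * (B i).card := by
              apply mul_le_mul_of_nonneg_right hRL (by positivity)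
      have hcpos : (0 : ℝ) < (B i).card := by
        exact_mod_cast Finset.card_pos.2 hne
      have hapos : (0 : ℝ) < (r j i : ℝ) := by exact_mod_cast hpos
      have hdnn : (0 : ℝ) ≤ (r j i : ℝ) - r j (i + 1) := by
        have := hrmono j i; exact sub_nonneg.2 (by exact_mod_cast this)
      -- L(B i)/c ≤ L(P j)/a
      have hstep1 : L (B i) * ((r j i : ℝ) - r j (i + 1)) / (B i).card ≤
          L (P j) * (((r j i : ℝ) - r j (i + 1)) / (r j i)) := by
        rw [div_le_iff₀ hcpos]
        have : L (P j) * (((r j i : ℝ) - r j (i + 1)) / (r j i)) * (B i).card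
            = (L (P j) * (B i).card) * (((r j i : ℝ) - r j (i + 1)) / (r j i)) := by ring
        rw [this]
        have h2 : L (B i) * ((r j i : ℝ) - r j (i + 1)) =
            (L (B i) * (r j i : ℝ)) * (((r j i : ℝ) - r j (i + 1)) / (r j i)) := by
          field_simp
        rw [h2]
        apply mul_le_mul_of_nonneg_right hgr2 (by positivity)
      refine hstep1.trans ?_
      apply mul_le_mul_of_nonneg_left _ (hnn _)
      exact harm_diff (hrmono j i) hpos
  -- now assemble
  have hmain : ∑ i ∈ range l, L (B i) ≤
      ∑ j ∈ range l', L (P j) * (harm (r j 0) - harm (r j l)) := by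
    have h1 : ∀ i ∈ range l, L (B i) =
        ∑ j ∈ range l', L (B i) * ((r j i : ℝ) - r j (i + 1)) / (B i).card := by
      intro i hi
      have hi' := Finset.mem_range.1 hi
      obtain ⟨hne, _, _, _⟩ := hgreedy i hi'
      have hcpos : ((B i).card : ℝ) ≠ 0 := by
        have : 0 < (B i).card := Finset.card_pos.2 hne
        exact_mod_cast this.ne'
      rw [← Finset.sum_div, ← Finset.mul_sum]
      have hsum : ∑ j ∈ range l', ((r j i : ℝ) - r j (i + 1)) = ((B i).card : ℝ) := by
        have := hBdecomp i hi'
        calc ∑ j ∈ range l', ((r j i : ℝ) - r j (i + 1))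
            = ∑ j ∈ range l', ((r j i - r j (i + 1) : ℕ) : ℝ) := by
              apply Finset.sum_congr rfl
              intro j _
              exact_mod_cast (Nat.cast_sub (hrmono j i)).symm
          _ = ((∑ j ∈ range l', (r j i - r j (i + 1)) : ℕ) : ℝ) := by
              rw [Nat.cast_sum]
          _ = ((B i).card : ℝ) := by rw [this]
      rw [hsum, mul_div_assoc, div_self hcpos, mul_one]
    rw [Finset.sum_congr rfl h1, Finset.sum_comm]
    apply Finset.sum_le_sum
    intro j hj
    have hj' := Finset.mem_range.1 hj
    have htel : ∑ i ∈ range l, (harm (r j i) - harm (r j (i + 1))) =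
        harm (r j 0) - harm (r j l) := Finset.sum_range_sub' (fun i => harm (r j i)) l
    calc ∑ i ∈ range l, L (B i) * ((r j i : ℝ) - r j (i + 1)) / (B i).card
        ≤ ∑ i ∈ range l, L (P j) * (harm (r j i) - harm (r j (i + 1))) := by
          apply Finset.sum_le_sum
          intro i hi
          exact hkey i (Finset.mem_range.1 hi) j hj'
      _ = L (P j) * (harm (r j 0) - harm (r j l)) := by
          rw [← Finset.mul_sum, htel]
  refine hmain.trans ?_
  have hrl : ∀ j, r j l = 0 := by
    intro j; simp [hr, hdone]
  have hr0 : ∀ j, r j 0 ≤ m := by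
    intro j
    calc r j 0 ≤ (P j).card := Finset.card_le_card Finset.inter_subset_left
      _ ≤ m := Finset.card_le_univ _
  have hfin : ∀ j ∈ range l', L (P j) * (harm (r j 0) - harm (r j l)) ≤
      harm m * L (P j) := by
    intro j _
    rw [hrl j]
    have : harm 0 = 0 := by simp [harm]
    rw [this, sub_zero]
    rw [mul_comm (harm m)]
    exact mul_le_mul_of_nonneg_left (harm_mono (hr0 j)) (hnn _)
  calc ∑ j ∈ range l', L (P j) * (harm (r j 0) - harm (r j l))
      ≤ ∑ j ∈ range l', harm m * L (P j) := Finset.sum_le_sum hfin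
    _ = (∑ k ∈ range m, (1 : ℝ) / (k + 1)) * ∑ j ∈ range l', L (P j) := by
        rw [← Finset.mul_sum]; rfl
end

section
/- In the generalized covering problem where each element u of an n-element universe U is covered by designated single sets or pairs of sets from a family 𝒮 with positive costs, the plain greedy algorithm that in each iteration picks a single set S maximizing (newly covered elements)/c(S) has unbounded approximation ratio: for every ratio R > 0 there exists an instance on which plain greedy's cost exceeds R times the optimum. Concretely, an instance exists where all elements are covered only by one specific pair {S_1, S_2} acting jointly (no single set covers anything alone), so plain greedy (which evaluates single sets) makes no progress or picks arbitrarily badly, while picking the pair costs c(S_1)+c(S_2). -/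
open Finset

open Classical in
lemma ncard_punit (P : Prop) : Set.ncard {_u : PUnit | P} = if P then 1 else 0 := by
  by_cases h : P
  · simp [h, Set.ncard_univ]
  · simp [h]

/-- In the pair-cover generalization of weighted set cover (each element is
covered by designated units of at most two sets), the plain greedy that
picks single sets maximizing newly-covered elements per unit cost has
unbounded approximation ratio: for every `R > 0` there is an instance, in
which every element is covered only via pairs of sets acting jointly, and a
valid plain-greedy execution whose total cost exceeds `R` times the cost of
an optimal cover. -/
theorem stmt17 :
    ∀ R : ℝ, 0 < R →
    ∃ (U M : Type) (_ : Fintype U) (_ : Nonempty U) (_ : DecidableEq M)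
      (cov : U → Set (Finset M)) (c : M → ℝ),
      (∀ m, 0 < c m) ∧
      -- every element is coverable, but only by units of exactly two sets
      (∀ u, ∃ s ∈ cov u, s.Nonempty ∧ s.card ≤ 2) ∧
      (∀ u, ∀ s ∈ cov u, s.card = 2) ∧
      ∃ (picks : List M) (Copt : Finset M),
        (∀ u, ∃ s ∈ cov u, s ⊆ Copt) ∧
        -- plain-greedy validity: each pick maximizes newly covered per unit cost
        (∀ (i : ℕ) (hi : i < picks.length), ∀ m' : M,
          (Set.ncard {u | (∃ s ∈ cov u, s ⊆ insert m' (picks.take i).toFinset) ∧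
              ¬ ∃ s ∈ cov u, s ⊆ (picks.take i).toFinset} : ℝ) * c (picks.get ⟨i, hi⟩) ≤
          (Set.ncard {u | (∃ s ∈ cov u, s ⊆ insert (picks.get ⟨i, hi⟩) (picks.take i).toFinset) ∧
              ¬ ∃ s ∈ cov u, s ⊆ (picks.take i).toFinset} : ℝ) * c m') ∧
        -- the greedy execution covers everything in the end
        (∀ u, ∃ s ∈ cov u, s ⊆ picks.toFinset) ∧
        -- but its cost exceeds R times the optimum
        R * (∑ m ∈ Copt, c m) < ∑ m ∈ picks.toFinset, c m := by
  intro R hR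
  refine ⟨PUnit, Fin 3, inferInstance, inferInstance, inferInstance,
    fun _ => {({0,1} : Finset (Fin 3))},
    fun m => if m = 2 then 2*R else 1, ?_, ?_, ?_, ?_⟩
  · intro m; dsimp only; split
    · linarith
    · norm_num
  · intro u; exact ⟨{0,1}, rfl, by decide, by decide⟩
  · intro u s hs; rw [Set.mem_singleton_iff] at hs; subst hs; decide
  refine ⟨[2,0,1], {0,1}, ?_, ?_, ?_, ?_⟩
  · intro u; exact ⟨{0,1}, rfl, subset_rfl⟩
  · intro i hi m'
    simp only [Set.mem_singleton_iff, exists_eq_left]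
    have h3 : i < 3 := by simpa using hi
    interval_cases i <;> fin_cases m' <;>
      simp only [List.take, List.toFinset_cons, List.toFinset_nil, List.get] <;>
      rw [ncard_punit, ncard_punit] <;>
      simp (config := { decide := true }) <;> linarith
  · intro u; exact ⟨{0,1}, rfl, by decide⟩
  · have : ([2,0,1] : List (Fin 3)).toFinset = {2,0,1} := by decide
    rw [this]
    simp (config := { decide := true }) [Finset.sum_insert, Finset.mem_insert]
    linarith
end
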